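/- arXiv:1804.04468 — 5 statements merged into one kernel-verified Lean document; each statement's English description precedes it below -/
import Mathlib

section
/- For any nonempty A ⊆ X, the diameter satisfies D(A) ≺ D(cls A) ≺ 2D(A), i.e., D(cls A) ⊆ D(A) and 2D(A) ⊆ D(cls A). -/
open Set

universe u

variable {X : Type u}

/-- `U` is a cover of `X`. -/
def IsCover (X : Type u) (U : Set (Set X)) : Prop := ∀ x : X, ∃ u ∈ U, x ∈ u

/-- `V` refines `U`. -/
def Refines (V U : Set (Set X)) : Prop := ∀ v ∈ V, ∃ u ∈ U, v ⊆ u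

/-- `V` double-refines `U` (`V ≤ ½U`). -/
def DblRefines (V U : Set (Set X)) : Prop :=
  ∀ v₁ ∈ V, ∀ v₂ ∈ V, (v₁ ∩ v₂).Nonempty → ∃ u ∈ U, v₁ ∪ v₂ ⊆ u

/-- The star `St[Y,U]` of a set `Y` with respect to a covering `U`. -/
def starSet (Y : Set X) (U : Set (Set X)) : Set X := ⋃₀ {u | u ∈ U ∧ (Y ∩ u).Nonempty}

/-- The star `St[x,U]` of a point. -/
def stx (x : X) (U : Set (Set X)) : Set X := ⋃₀ {u | u ∈ U ∧ x ∈ u}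

/-- `O` is an admissible family of open coverings of the topological space `X`:
every member is an open covering, `O` is directed by double-refinement, and the
stars `St[x,U]`, `U ∈ O`, form a neighborhood base at each point `x`. -/
def IsAdmissible [TopologicalSpace X] (O : Set (Set (Set X))) : Prop :=
  (∀ U ∈ O, ∀ u ∈ U, IsOpen u) ∧
  (∀ U ∈ O, IsCover X U) ∧
  (∀ U ∈ O, ∀ V ∈ O, ∃ W ∈ O, DblRefines W U ∧ DblRefines W V) ∧
  (∀ x : X, (nhds x).HasBasis (fun U => U ∈ O) (fun U => stx x U))

/-- `PowRefines n V U` means `V ≤ (1/2ⁿ)U` (iterated double-refinement);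
for `n = 0` it degenerates to equality. -/
def PowRefines : ℕ → Set (Set X) → Set (Set X) → Prop
  | 0 => fun V U => V = U
  | n + 1 => fun V U => ∃ W : Set (Set X), DblRefines V W ∧ PowRefines n W U

/-- The operation `E ↦ nE` on subsets of `O`. -/
def mulE (O : Set (Set (Set X))) (n : ℕ) (E : Set (Set (Set X))) : Set (Set (Set X)) :=
  {U | U ∈ O ∧ ∃ V ∈ E, PowRefines n V U}

/-- `ρ(x,y) = {U ∈ O : y ∈ St[x,U]}`. -/
def rho (O : Set (Set (Set X))) (x y : X) : Set (Set (Set X)) :=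
  {U | U ∈ O ∧ y ∈ stx x U}

/-- The diameter `D(Y) = ⋂_{x,y ∈ Y} ρ(x,y)`. -/
def diamD (O : Set (Set (Set X))) (Y : Set X) : Set (Set (Set X)) :=
  ⋂ x ∈ Y, ⋂ y ∈ Y, rho O x y

/-- A net is `O`-Cauchy. -/
def IsCauchyNet {ι : Type*} [Preorder ι] (O : Set (Set (Set X))) (s : ι → X) : Prop :=
  ∀ U ∈ O, ∃ i₀ : ι, ∀ i ≥ i₀, ∀ j ≥ i₀, s i ∈ stx (s j) U

/-- Convergence of a net to a point. -/
def ConvNet [TopologicalSpace X] {ι : Type*} [Preorder ι] (s : ι → X) (p : X) : Prop :=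
  ∀ N ∈ nhds p, ∃ i₀ : ι, ∀ i ≥ i₀, s i ∈ N

/-- `X` is a complete admissible space: every Cauchy net (over a nonempty directed
preorder) converges. -/
def IsCompleteAdm [TopologicalSpace X] (O : Set (Set (Set X))) : Prop :=
  ∀ (ι : Type u) [Preorder ι] [Nonempty ι],
    (∀ i j : ι, ∃ k, i ≤ k ∧ j ≤ k) →
    ∀ s : ι → X, IsCauchyNet O s → ∃ p : X, ConvNet s p

/-- `X` is totally bounded: each `U ∈ O` admits finitely many points whose
`U`-stars cover `X`. -/
def TotallyBoundedAdm (O : Set (Set (Set X))) : Prop :=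
  ∀ U ∈ O, ∃ (n : ℕ) (p : Fin n → X), (⋃ i, stx (p i) U) = univ

/-- The star measure of noncompactness. -/
def alphaM (O : Set (Set (Set X))) (Y : Set X) : Set (Set (Set X)) :=
  {U | U ∈ O ∧ ∃ (n : ℕ) (p : Fin n → X), Y ⊆ ⋃ i, stx (p i) U}

/-- The diameter measure of noncompactness. -/
def gammaM (O : Set (Set (Set X))) (Y : Set X) : Set (Set (Set X)) :=
  {U | U ∈ O ∧ ∃ (n : ℕ) (S : Fin n → Set X), Y ⊆ (⋃ i, S i) ∧ ∀ i, U ∈ diamD O (S i)}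

theorem stmt10 [TopologicalSpace X] (O : Set (Set (Set X))) (hO : IsAdmissible O)
    (A : Set X) (hA : A.Nonempty) :
    diamD O (closure A) ⊆ diamD O A ∧ mulE O 2 (diamD O A) ⊆ diamD O (closure A) := by
  obtain ⟨hopen, hcov, _, _⟩ := hO
  constructor
  · intro U hU
    simp only [diamD, mem_iInter] at hU ⊢
    intro x hx y hy
    exact hU x (subset_closure hx) y (subset_closure hy)
  · rintro U ⟨hUO, V, hVD, W, hVW, W', hWW', rfl⟩
    obtain ⟨a0, ha0⟩ := hA
    have hVO : V ∈ O := by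
      have := mem_iInter.mp (mem_iInter.mp (mem_iInter.mp (mem_iInter.mp hVD a0) ha0) a0) ha0
      exact this.1
    have hstar : ∀ x : X, IsOpen (stx x V) ∧ x ∈ stx x V := by
      intro x
      constructor
      · exact isOpen_sUnion (fun u hu => hopen V hVO u hu.1)
      · obtain ⟨v, hv, hxv⟩ := hcov V hVO x
        exact ⟨v, ⟨hv, hxv⟩, hxv⟩
    simp only [diamD, mem_iInter]
    intro x hx y hy
    have hxA : (A ∩ stx x V).Nonempty := by
      have := (mem_closure_iff.mp hx) (stx x V) (hstar x).1 (hstar x).2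
      exact this.imp (fun a ha => ⟨ha.2, ha.1⟩)
    have hyA : (A ∩ stx y V).Nonempty := by
      have := (mem_closure_iff.mp hy) (stx y V) (hstar y).1 (hstar y).2
      exact this.imp (fun a ha => ⟨ha.2, ha.1⟩)
    obtain ⟨a, haA, v₁, ⟨hv₁V, hxv₁⟩, hav₁⟩ := hxA
    obtain ⟨b, hbA, v₂, ⟨hv₂V, hyv₂⟩, hbv₂⟩ := hyA
    have hab : b ∈ stx a V :=
      (mem_iInter.mp (mem_iInter.mp (mem_iInter.mp (mem_iInter.mp hVD a) haA) b) hbA).2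
    obtain ⟨v₃, ⟨hv₃V, hav₃⟩, hbv₃⟩ := hab
    obtain ⟨w₁, hw₁W, hsub₁⟩ := hVW v₁ hv₁V v₃ hv₃V ⟨a, hav₁, hav₃⟩
    obtain ⟨w₂, hw₂W, hsub₂⟩ := hVW v₂ hv₂V v₃ hv₃V ⟨b, hbv₂, hbv₃⟩
    obtain ⟨u, huU, hsub⟩ := hWW' w₁ hw₁W w₂ hw₂W
      ⟨a, hsub₁ (Or.inr hav₃), hsub₂ (Or.inr hav₃)⟩
    refine ⟨hUO, u, ⟨huU, hsub (Or.inl (hsub₁ (Or.inl hxv₁)))⟩,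
      hsub (Or.inr (hsub₂ (Or.inl hyv₂)))⟩
end

section
/- If the admissible space X is uniformly locally compact (there exists U ∈ O such that cls(St[x,U]) is compact for every x ∈ X), then X is complete, i.e., every Cauchy net converges. -/
open Set

universe u

variable {X : Type u}

theorem stmt12 [TopologicalSpace X] (O : Set (Set (Set X))) (hO : IsAdmissible O)
    (hulc : ∃ U ∈ O, ∀ x : X, IsCompact (closure (stx x U))) :
    IsCompleteAdm O := by
  obtain ⟨U, hU, hK⟩ := hulc
  intro ι _ _ hdir s hs
  haveI : (Filter.atTop : Filter ι).NeBot :=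
    Filter.atTop_neBot_iff.mpr ⟨inferInstance, ⟨hdir⟩⟩
  -- tail of the net lies in a compact set
  obtain ⟨i₀, hi₀⟩ := hs U hU
  set K := closure (stx (s i₀) U) with hKdef
  have hmem : ∀ i ≥ i₀, s i ∈ K := fun i hi =>
    subset_closure (hi₀ i hi i₀ le_rfl)
  have hle : Filter.map s Filter.atTop ≤ Filter.principal K := by
    rw [Filter.le_principal_iff]
    exact Filter.mem_map.mpr (Filter.mem_of_superset (Filter.Ici_mem_atTop i₀) hmem)
  obtain ⟨p, _, hp⟩ := (hK (s i₀)) hle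
  refine ⟨p, ?_⟩
  intro N hN
  obtain ⟨V, hV, hVN⟩ := ((hO.2.2.2 p).mem_iff).mp hN
  obtain ⟨W, hW, hWV, -⟩ := hO.2.2.1 V hV V hV
  obtain ⟨i₁, hi₁⟩ := hs W hW
  -- cluster point: find j ≥ i₁ with s j ∈ stx p W
  have hnbW : stx p W ∈ nhds p := (hO.2.2.2 p).mem_of_mem hW
  have hIci : s '' Set.Ici i₁ ∈ Filter.map s Filter.atTop :=
    Filter.mem_map.mpr (Filter.mem_of_superset (Filter.Ici_mem_atTop i₁)
      fun i hi => Set.mem_image_of_mem s hi)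
  obtain ⟨x, hx1, hx2⟩ := (clusterPt_iff_nonempty.mp hp) hnbW hIci
  obtain ⟨j, hj, rfl⟩ := hx2
  refine ⟨i₁, fun i hi => hVN ?_⟩
  -- s i ∈ stx (s j) W and s j ∈ stx p W; glue via double refinement
  obtain ⟨w, ⟨hwW, hjw⟩, hiw⟩ := hi₁ i hi j hj
  obtain ⟨w', ⟨hw'W, hpw'⟩, hjw'⟩ := hx1
  obtain ⟨v, hvV, hsub⟩ := hWV w hwW w' hw'W ⟨s j, hjw, hjw'⟩
  exact ⟨v, ⟨hvV, hsub (Or.inr hpw')⟩, hsub (Or.inl hiw)⟩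
end

section
/- Cantor intersection theorem: the admissible space X is complete if and only if every decreasing net (F_λ) of nonempty closed sets with D(F_λ) → O has nonempty intersection; if moreover X is Hausdorff, this intersection is a single point. -/
open Set

universe u

variable {X : Type u}

lemma mem_diamD_iff {X : Type u} (O : Set (Set (Set X))) (Y : Set X) (U : Set (Set X)) :
    U ∈ diamD O Y ↔ ∀ x ∈ Y, ∀ y ∈ Y, U ∈ O ∧ y ∈ stx x U := by
  simp [diamD, rho, mem_iInter, mem_setOf_eq]

lemma tail_diam {X : Type u} {ι : Type u} [Preorder ι] [TopologicalSpace X]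
    (O : Set (Set (Set X))) (hO : IsAdmissible O) (s : ι → X) (hs : IsCauchyNet O s)
    (U : Set (Set X)) (hU : U ∈ O) :
    ∃ i₀ : ι, ∀ i ≥ i₀, ∀ x ∈ closure (s '' {j | i ≤ j}), ∀ y ∈ closure (s '' {j | i ≤ j}),
      y ∈ stx x U := by
  obtain ⟨V, hV, hVU, -⟩ := hO.2.2.1 U hU U hU
  obtain ⟨W, hW, hWV, -⟩ := hO.2.2.1 V hV V hV
  obtain ⟨i₀, hi₀⟩ := hs W hW
  refine ⟨i₀, fun i hi x hx y hy => ?_⟩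
  have hxW : stx x W ∈ nhds x := (hO.2.2.2 x).mem_of_mem hW
  have hyW : stx y W ∈ nhds y := (hO.2.2.2 y).mem_of_mem hW
  obtain ⟨t, htW, ht⟩ := (mem_closure_iff_nhds.mp hx (stx x W) hxW)
  obtain ⟨t', ht'W, ht'⟩ := (mem_closure_iff_nhds.mp hy (stx y W) hyW)
  obtain ⟨j, hj, rfl⟩ := ht
  obtain ⟨k, hk, rfl⟩ := ht'
  obtain ⟨w₁, ⟨hw₁W, hxw₁⟩, hjw₁⟩ := htW
  obtain ⟨w₂, ⟨hw₂W, hyw₂⟩, hkw₂⟩ := ht'W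
  obtain ⟨w, ⟨hwW, hkw⟩, hjw⟩ := hi₀ j (le_trans hi hj) k (le_trans hi hk)
  obtain ⟨v₁, hv₁V, hv₁⟩ := hWV w₁ hw₁W w hwW ⟨s j, hjw₁, hjw⟩
  obtain ⟨v₂, hv₂V, hv₂⟩ := hWV w₂ hw₂W w hwW ⟨s k, hkw₂, hkw⟩
  obtain ⟨u, huU, hu⟩ := hVU v₁ hv₁V v₂ hv₂V ⟨s j, hv₁ (Or.inr hjw), hv₂ (Or.inr hjw)⟩
  exact ⟨u, ⟨huU, hu (Or.inl (hv₁ (Or.inl hxw₁)))⟩, hu (Or.inr (hv₂ (Or.inl hyw₂)))⟩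

lemma cantor_fwd {X : Type u} [TopologicalSpace X] (O : Set (Set (Set X)))
    (hO : IsAdmissible O) (hcomp : IsCompleteAdm O) :
    ∀ (ι : Type u) [Preorder ι] [Nonempty ι],
      (∀ i j : ι, ∃ k, i ≤ k ∧ j ≤ k) →
      ∀ F : ι → Set X, (∀ i, (F i).Nonempty) → (∀ i, IsClosed (F i)) →
        (∀ i j, i ≤ j → F j ⊆ F i) →
        (∀ U ∈ O, ∃ i₀, ∀ i ≥ i₀, U ∈ diamD O (F i)) →
        (⋂ i, F i).Nonempty := by
  intro ι _ _ hdir F hne hcl hdec hD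
  set s : ι → X := fun i => (hne i).some with hs_def
  have hsF : ∀ i, s i ∈ F i := fun i => (hne i).some_mem
  have hcau : IsCauchyNet O s := by
    intro U hU
    obtain ⟨i₀, hi₀⟩ := hD U hU
    refine ⟨i₀, fun i hi j hj => ?_⟩
    have := (mem_diamD_iff O (F i₀) U).mp (hi₀ i₀ le_rfl)
    exact (this (s j) (hdec i₀ j hj (hsF j)) (s i) (hdec i₀ i hi (hsF i))).2
  obtain ⟨p, hp⟩ := hcomp ι hdir s hcau
  refine ⟨p, mem_iInter.mpr fun i => ?_⟩
  by_contra hpF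
  obtain ⟨j₀, hj₀⟩ := hp (F i)ᶜ ((hcl i).isOpen_compl.mem_nhds hpF)
  obtain ⟨k, hki, hkj⟩ := hdir i j₀
  exact hj₀ k hkj (hdec i k hki (hsF k))

lemma cantor_bwd {X : Type u} [TopologicalSpace X] (O : Set (Set (Set X)))
    (hO : IsAdmissible O)
    (hcantor : ∀ (ι : Type u) [Preorder ι] [Nonempty ι],
      (∀ i j : ι, ∃ k, i ≤ k ∧ j ≤ k) →
      ∀ F : ι → Set X, (∀ i, (F i).Nonempty) → (∀ i, IsClosed (F i)) →
        (∀ i j, i ≤ j → F j ⊆ F i) →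
        (∀ U ∈ O, ∃ i₀, ∀ i ≥ i₀, U ∈ diamD O (F i)) →
        (⋂ i, F i).Nonempty) : IsCompleteAdm O := by
  intro ι _ _ hdir s hcau
  set F : ι → Set X := fun i => closure (s '' {j | i ≤ j}) with hF_def
  have hsF : ∀ i j, i ≤ j → s j ∈ F i := fun i j hij =>
    subset_closure ⟨j, hij, rfl⟩
  have hdec : ∀ i j, i ≤ j → F j ⊆ F i := fun i j hij =>
    closure_mono (image_mono (fun k hk => le_trans hij hk))
  have hdiam : ∀ U ∈ O, ∃ i₀, ∀ i ≥ i₀, ∀ x ∈ F i, ∀ y ∈ F i, y ∈ stx x U :=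
    fun U hU => tail_diam O hO s hcau U hU
  have hD : ∀ U ∈ O, ∃ i₀, ∀ i ≥ i₀, U ∈ diamD O (F i) := by
    intro U hU
    obtain ⟨i₀, hi₀⟩ := hdiam U hU
    exact ⟨i₀, fun i hi => (mem_diamD_iff O (F i) U).mpr
      fun x hx y hy => ⟨hU, hi₀ i hi x hx y hy⟩⟩
  obtain ⟨p, hp⟩ := hcantor ι hdir F (fun i => ⟨s i, hsF i i le_rfl⟩)
    (fun i => isClosed_closure) hdec hD
  refine ⟨p, fun N hN => ?_⟩
  obtain ⟨U, hU, hUN⟩ := ((hO.2.2.2 p).mem_iff).mp hN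
  obtain ⟨i₀, hi₀⟩ := hdiam U hU
  refine ⟨i₀, fun i hi => hUN (hi₀ i hi p (mem_iInter.mp hp i) (s i) (hsF i i le_rfl))⟩

theorem stmt14 [TopologicalSpace X] (O : Set (Set (Set X))) (hO : IsAdmissible O) :
    (IsCompleteAdm O ↔
      ∀ (ι : Type u) [Preorder ι] [Nonempty ι],
        (∀ i j : ι, ∃ k, i ≤ k ∧ j ≤ k) →
        ∀ F : ι → Set X, (∀ i, (F i).Nonempty) → (∀ i, IsClosed (F i)) →
          (∀ i j, i ≤ j → F j ⊆ F i) →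
          (∀ U ∈ O, ∃ i₀, ∀ i ≥ i₀, U ∈ diamD O (F i)) →
          (⋂ i, F i).Nonempty) ∧
    (T2Space X → IsCompleteAdm O →
      ∀ (ι : Type u) [Preorder ι] [Nonempty ι],
        (∀ i j : ι, ∃ k, i ≤ k ∧ j ≤ k) →
        ∀ F : ι → Set X, (∀ i, (F i).Nonempty) → (∀ i, IsClosed (F i)) →
          (∀ i j, i ≤ j → F j ⊆ F i) →
          (∀ U ∈ O, ∃ i₀, ∀ i ≥ i₀, U ∈ diamD O (F i)) →
          ∃ p : X, (⋂ i, F i) = {p}):= by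
  have hfwd := cantor_fwd O hO
  constructor
  · constructor
    · exact hfwd
    · exact cantor_bwd O hO
  · intro hT2 hcomp ι _ _ hdir F hne hcl hdec hD
    obtain ⟨p, hp⟩ := hfwd hcomp ι hdir F hne hcl hdec hD
    refine ⟨p, Subset.antisymm (fun q hq => ?_) (singleton_subset_iff.mpr hp)⟩
    have hq' : ∀ U ∈ O, q ∈ stx p U := by
      intro U hU
      obtain ⟨i₀, hi₀⟩ := hD U hU
      exact ((mem_diamD_iff O (F i₀) U).mp (hi₀ i₀ le_rfl) p (mem_iInter.mp hp i₀)
        q (mem_iInter.mp hq i₀)).2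
    by_contra hqp
    have : ({q}ᶜ : Set X) ∈ nhds p :=
      isOpen_compl_singleton.mem_nhds (by simpa [eq_comm] using hqp)
    obtain ⟨U, hU, hUc⟩ := ((hO.2.2.2 p).mem_iff).mp this
    exact hUc (hq' U hU) rfl
end

section
/- The admissible space X is totally bounded if and only if every net in X has a Cauchy subnet. -/
open Set

universe u

variable {X : Type u}

theorem stmt16 [TopologicalSpace X] (O : Set (Set (Set X))) (hO : IsAdmissible O) :
    TotallyBoundedAdm O ↔
      ∀ (ι : Type u) [Preorder ι] [Nonempty ι],
        (∀ i j : ι, ∃ k, i ≤ k ∧ j ≤ k) →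
        ∀ s : ι → X,
          ∃ (κ : Type u) (pκ : Preorder κ), Nonempty κ ∧
            (∀ a b : κ, ∃ c, pκ.le a c ∧ pκ.le b c) ∧
            ∃ φ : κ → ι, (∀ i₀ : ι, ∃ k₀ : κ, ∀ k : κ, pκ.le k₀ k → i₀ ≤ φ k) ∧
              @IsCauchyNet X κ pκ O (s ∘ φ) := by

  classical
  constructor
  · -- totally bounded → every net has a Cauchy subnet
    intro htb ι _ _ hdir s
    haveI : IsDirected ι (· ≤ ·) := ⟨hdir⟩
    haveI : (Filter.atTop : Filter ι).NeBot := Filter.atTop_neBot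
    set F : Ultrafilter ι := Ultrafilter.of Filter.atTop with hFdef
    have hF : (F : Filter ι) ≤ Filter.atTop := Ultrafilter.of_le _
    refine ⟨{p : ι × Set ι // p.2 ∈ F ∧ p.1 ∈ p.2},
      { le := fun a b => a.1.1 ≤ b.1.1 ∧ b.1.2 ⊆ a.1.2
        lt := fun a b => (a.1.1 ≤ b.1.1 ∧ b.1.2 ⊆ a.1.2) ∧
          ¬(b.1.1 ≤ a.1.1 ∧ a.1.2 ⊆ b.1.2)
        lt_iff_le_not_ge := fun _ _ => Iff.rfl
        le_refl := fun a => ⟨le_refl _, subset_rfl⟩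
        le_trans := fun a b c hab hbc => ⟨le_trans hab.1 hbc.1, hbc.2.trans hab.2⟩ }, ?_, ?_, ?_⟩
    · obtain ⟨i⟩ := (inferInstance : Nonempty ι)
      exact ⟨⟨(i, Set.univ), Filter.univ_mem, mem_univ _⟩⟩
    · rintro ⟨⟨i, A⟩, hA, hiA⟩ ⟨⟨j, B⟩, hB, hjB⟩
      have hS : (A ∩ B ∩ {k | i ≤ k ∧ j ≤ k}) ∈ F := by
        refine Filter.inter_mem (Filter.inter_mem hA hB) (hF ?_)
        exact Filter.inter_mem (Filter.mem_atTop i) (Filter.mem_atTop j)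
      obtain ⟨k, hk⟩ := Filter.nonempty_of_mem hS
      refine ⟨⟨(k, A ∩ B), Filter.inter_mem hA hB, hk.1⟩, ⟨hk.2.1, inter_subset_left⟩,
        ⟨hk.2.2, inter_subset_right⟩⟩
    · refine ⟨fun a => a.1.1, ?_, ?_⟩
      · intro i₀
        exact ⟨⟨(i₀, Set.univ), Filter.univ_mem, mem_univ _⟩, fun k hk => hk.1⟩
      · intro U hU
        obtain ⟨V, hV, hVU, -⟩ := hO.2.2.1 U hU U hU
        obtain ⟨n, p, hcov⟩ := htb V hV
        have hmem : (⋃ i, s ⁻¹' stx (p i) V) ∈ F := by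
          have : (⋃ i, s ⁻¹' stx (p i) V) = Set.univ := by
            ext x
            simp only [mem_iUnion, mem_preimage, mem_univ, iff_true]
            have := hcov ▸ mem_univ (s x)
            simpa [mem_iUnion] using this
          rw [this]; exact Filter.univ_mem
        rw [← biUnion_univ, Ultrafilter.finite_biUnion_mem_iff finite_univ] at hmem
        obtain ⟨i, -, hAi⟩ := hmem
        obtain ⟨j₁, hj₁⟩ := Filter.nonempty_of_mem hAi
        refine ⟨⟨(j₁, s ⁻¹' stx (p i) V), hAi, hj₁⟩, ?_⟩
        rintro ⟨⟨a, A⟩, hA, haA⟩ ⟨-, hsub⟩ ⟨⟨b, B⟩, hB, hbB⟩ ⟨-, hsub'⟩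
        have ha : s a ∈ stx (p i) V := hsub haA
        have hb : s b ∈ stx (p i) V := hsub' hbB
        obtain ⟨v₁, ⟨hv₁V, hpv₁⟩, hav₁⟩ := ha
        obtain ⟨v₂, ⟨hv₂V, hpv₂⟩, hbv₂⟩ := hb
        obtain ⟨u, huU, hvu⟩ := hVU v₁ hv₁V v₂ hv₂V ⟨p i, hpv₁, hpv₂⟩
        exact ⟨u, ⟨huU, hvu (Or.inr hbv₂)⟩, hvu (Or.inl hav₁)⟩
  · -- every net has a Cauchy subnet → totally bounded
    intro h U hU
    by_contra hnb
    push_neg at hnb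
    have hex : ∀ Fs : Finset X, ∃ x : X, x ∉ ⋃ y ∈ (Fs : Set X), stx y U := by
      intro Fs
      by_contra hc
      push_neg at hc
      refine hnb Fs.toList.length (fun i => Fs.toList.get i) ?_
      ext x
      simp only [mem_iUnion, mem_univ, iff_true]
      have hx := hc x
      simp only [mem_iUnion, not_not, not_forall, not_not] at hx
      obtain ⟨y, hyF, hxy⟩ := by
        simpa [mem_iUnion] using hx
      obtain ⟨i, hi⟩ := List.mem_iff_get.mp (Finset.mem_toList.mpr hyF)
      exact ⟨i, hi ▸ hxy⟩
    choose s hs using hex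
    obtain ⟨κ, pκ, hne, hdirκ, φ, hcof, hcau⟩ :=
      h (Finset X) (fun i j => ⟨i ∪ j, Finset.subset_union_left, Finset.subset_union_right⟩) s
    obtain ⟨k₀, hk₀⟩ := hcau U hU
    set x := s (φ k₀) with hxdef
    obtain ⟨k₂, hk₂⟩ := hcof {x}
    obtain ⟨k₃, hk₃0, hk₃2⟩ := hdirκ k₀ k₂
    have hmem : s (φ k₃) ∈ stx x U := hk₀ k₃ hk₃0 k₀ (pκ.le_refl k₀)
    have hxin : x ∈ φ k₃ := hk₂ k₃ hk₃2 (Finset.mem_singleton_self x)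
    exact hs (φ k₃) (mem_biUnion hxin hmem)
end

section
/- The admissible space X is compact if and only if it is complete and totally bounded. -/
open Set

universe u

variable {X : Type u}

lemma mem_stx_self {U : Set (Set X)} (hU : IsCover X U) (x : X) : x ∈ stx x U := by
  obtain ⟨u, hu, hx⟩ := hU x
  exact ⟨u, ⟨hu, hx⟩, hx⟩

lemma isOpen_stx [TopologicalSpace X] {U : Set (Set X)} (hU : ∀ u ∈ U, IsOpen u) (x : X) :
    IsOpen (stx x U) :=
  isOpen_sUnion fun u hu => hU u hu.1

/-- The star trick: if `W` double-refines `U` and `a, b ∈ St[p, W]`, then `b ∈ St[a, U]`. -/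
lemma star_trick {W U : Set (Set X)} (h : DblRefines W U) {p a b : X}
    (ha : a ∈ stx p W) (hb : b ∈ stx p W) : b ∈ stx a U := by
  obtain ⟨w₁, ⟨hw₁, hp₁⟩, ha₁⟩ := ha
  obtain ⟨w₂, ⟨hw₂, hp₂⟩, hb₂⟩ := hb
  obtain ⟨u, hu, hsub⟩ := h w₁ hw₁ w₂ hw₂ ⟨p, hp₁, hp₂⟩
  exact ⟨u, ⟨hu, hsub (Or.inl ha₁)⟩, hsub (Or.inr hb₂)⟩

theorem stmt17 [TopologicalSpace X] (O : Set (Set (Set X))) (hO : IsAdmissible O) :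
    CompactSpace X ↔ IsCompleteAdm O ∧ TotallyBoundedAdm O := by
  obtain ⟨hopen, hcov, hdir, hbasis⟩ := hO
  constructor
  · intro hc
    constructor
    · -- complete
      intro ι _ _ hdirι s hs
      haveI : Nonempty X := ⟨s (Classical.arbitrary ι)⟩
      haveI : Filter.NeBot (Filter.atTop : Filter ι) :=
        Filter.atTop_neBot_iff.2 ⟨inferInstance, ⟨fun i j => hdirι i j⟩⟩
      obtain ⟨p, hp⟩ := exists_clusterPt_of_compactSpace (Filter.map s Filter.atTop)
      refine ⟨p, ?_⟩
      intro N hN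
      obtain ⟨U, hUO, hUN⟩ := (hbasis p).mem_iff.1 hN
      obtain ⟨W, hWO, hWU, _⟩ := hdir U hUO U hUO
      obtain ⟨i₀, hi₀⟩ := hs W hWO
      -- find j ≥ i₀ with s j ∈ stx p W
      have hst : stx p W ∈ nhds p := (hbasis p).mem_of_mem hWO
      have htail : s '' {j | i₀ ≤ j} ∈ Filter.map s Filter.atTop :=
        Filter.image_mem_map (Filter.mem_atTop i₀)
      obtain ⟨z, hz₁, hz₂⟩ := clusterPt_iff_nonempty.mp hp hst htail
      obtain ⟨j, hj, rfl⟩ := hz₂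
      refine ⟨i₀, fun i hi => hUN ?_⟩
      have h1 : s i ∈ stx (s j) W := hi₀ i hi j hj
      have h2 : p ∈ stx (s j) W := by
        obtain ⟨w, ⟨hw, hpw⟩, hjw⟩ := hz₁
        exact ⟨w, ⟨hw, hjw⟩, hpw⟩
      exact star_trick hWU h2 h1
    · -- totally bounded
      intro U hUO
      have hcover : (univ : Set X) ⊆ ⋃ x : X, stx x U := fun x _ =>
        mem_iUnion.2 ⟨x, mem_stx_self (hcov U hUO) x⟩
      obtain ⟨t, ht⟩ := isCompact_univ.elim_finite_subcover (fun x : X => stx x U)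
        (fun x => isOpen_stx (hopen U hUO) x) hcover
      refine ⟨t.card, fun i => (t.equivFin.symm i : X), ?_⟩
      apply eq_univ_of_univ_subset
      intro x hx
      obtain ⟨y, hy, hxy⟩ := by
        simpa using ht (mem_univ x)
      exact mem_iUnion.2 ⟨t.equivFin ⟨y, hy⟩, by simpa using hxy⟩
  · rintro ⟨hcomp, htb⟩
    rw [← isCompact_univ_iff, isCompact_iff_ultrafilter_le_nhds]
    intro F _
    -- index type for the net
    let ι : Type u := {q : X × Set X // q.1 ∈ q.2 ∧ q.2 ∈ F}
    letI : Preorder ι :=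
      { le := fun a b => b.1.2 ⊆ a.1.2
        le_refl := fun a => subset_rfl
        le_trans := fun a b c hab hbc x hx => hab (hbc hx) }
    have hdirι : ∀ i j : ι, ∃ k, i ≤ k ∧ j ≤ k := by
      rintro ⟨⟨x, M⟩, hxM, hMF⟩ ⟨⟨y, N⟩, hyN, hNF⟩
      obtain ⟨z, hz⟩ := Ultrafilter.nonempty_of_mem (F.inter_mem hMF hNF)
      exact ⟨⟨⟨z, M ∩ N⟩, hz, F.inter_mem hMF hNF⟩, inter_subset_left, inter_subset_right⟩
    obtain ⟨x₀, hx₀⟩ := Ultrafilter.nonempty_of_mem (F.univ_mem)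
    haveI : Nonempty ι := ⟨⟨⟨x₀, univ⟩, mem_univ x₀, F.univ_mem⟩⟩
    let s : ι → X := fun i => i.1.1
    have hcauchy : IsCauchyNet O s := by
      intro U hUO
      obtain ⟨W, hWO, hWU, _⟩ := hdir U hUO U hUO
      -- some star of W is in the ultrafilter
      obtain ⟨n, p, hpcov⟩ := htb W hWO
      have hex : ∃ k, stx (p k) W ∈ F := by
        by_contra h
        push_neg at h
        have : ∀ k, (stx (p k) W)ᶜ ∈ F := fun k =>
          (Ultrafilter.compl_mem_iff_notMem).2 (h k)
        have h2 : (⋂ k, (stx (p k) W)ᶜ) ∈ F := Filter.iInter_mem.2 this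
        rw [← compl_iUnion, hpcov, compl_univ] at h2
        exact F.empty_notMem h2
      obtain ⟨k, hk⟩ := hex
      obtain ⟨y₀, hy₀⟩ := Ultrafilter.nonempty_of_mem hk
      refine ⟨⟨⟨y₀, stx (p k) W⟩, hy₀, hk⟩, ?_⟩
      rintro ⟨⟨x, M⟩, hxM, hMF⟩ hiM ⟨⟨y, N⟩, hyN, hNF⟩ hjN
      have hx : x ∈ stx (p k) W := hiM hxM
      have hy : y ∈ stx (p k) W := hjN hyN
      exact star_trick hWU hy hx
    obtain ⟨q, hq⟩ := hcomp ι hdirι s hcauchy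
    refine ⟨q, mem_univ q, fun N hN => ?_⟩
    obtain ⟨⟨⟨z, B⟩, hzB, hBF⟩, hi₀⟩ := hq N hN
    have hBN : B ⊆ N := fun x hx => hi₀ ⟨⟨x, B⟩, hx, hBF⟩ (show B ⊆ B from subset_rfl)
    exact Filter.mem_of_superset hBF hBN
end
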